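/- For \tau > 0 and integer m \ge 0, the sum of 2\tau-shifted Hann windows equals a Tukey window: \sum_{k=-m}^{m} hann_\tau(x - k\tau) = tukey_{\alpha,\lambda}(x) for all real x, where \alpha = 1/(m+1) and \lambda = (m+1)\tau. -/
import Mathlib


open Real

/-- The Hann window on `(-τ, τ)`. -/
noncomputable def hann (τ : ℝ) (x : ℝ) : ℝ :=
  if |x| ≤ τ then Real.cos (π / (2 * τ) * x) ^ 2 else 0

/-- The Tukey window with parameter `α` on `(-λ, λ)`. -/
noncomputable def tukey (α lam : ℝ) (x : ℝ) : ℝ :=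
  if |x| < (1 - α) * lam then 1
  else if |x| ≤ lam then (1 / 2) * (1 - Real.cos (π * |x| / (α * lam) - π / α))
  else 0

lemma hann_zero (τ y : ℝ) (hτ : 0 < τ) (h : τ ≤ |y|) : hann τ y = 0 := by
  unfold hann
  split_ifs with h'
  · have hy : |y| = τ := le_antisymm h' h
    rcases (abs_eq (le_of_lt hτ)).mp hy with h1 | h1
    · rw [h1, show π / (2 * τ) * τ = π / 2 by field_simp]
      simp [Real.cos_pi_div_two]
    · rw [h1, show π / (2 * τ) * (-τ) = -(π / 2) by field_simp]
      simp [Real.cos_pi_div_two]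
  · rfl

lemma hann_neg (τ y : ℝ) : hann τ (-y) = hann τ y := by
  unfold hann
  rw [abs_neg, mul_neg, Real.cos_neg]

lemma key_lemma (τ : ℝ) (hτ : 0 < τ) (m : ℕ) (α lam : ℝ)
    (hα : α = 1 / ((m : ℝ) + 1)) (hlam : lam = ((m : ℝ) + 1) * τ)
    (x : ℝ) (hx : 0 ≤ x) :
    ∑ k ∈ Finset.Icc (-(m : ℤ)) (m : ℤ), hann τ (x - (k : ℝ) * τ) =
      tukey α lam x := by
  have hm1 : (0:ℝ) < (m : ℝ) + 1 := by positivity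
  have ha1 : (1 - α) * lam = (m : ℝ) * τ := by
    rw [hα, hlam]; field_simp; ring
  have ha2 : α * lam = τ := by
    rw [hα, hlam]; field_simp
  have habs : |x| = x := abs_of_nonneg hx
  rcases lt_or_ge lam x with hcase1 | hcase1
  · -- x > lam : everything is zero
    have hsum : ∀ k ∈ Finset.Icc (-(m : ℤ)) (m : ℤ), hann τ (x - (k : ℝ) * τ) = 0 := by
      intro k hk
      rw [Finset.mem_Icc] at hk
      apply hann_zero τ _ hτ
      have hk' : (k : ℝ) ≤ (m : ℝ) := by exact_mod_cast hk.2
      have : τ ≤ x - (k : ℝ) * τ := by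
        have h1 : (k : ℝ) * τ ≤ (m : ℝ) * τ := by
          apply mul_le_mul_of_nonneg_right hk' (le_of_lt hτ)
        nlinarith [hcase1, hlam]
      exact this.trans (le_abs_self _)
    rw [Finset.sum_eq_zero hsum]
    unfold tukey
    rw [habs, if_neg, if_neg]
    · linarith
    · push_neg
      rw [ha1]
      nlinarith [hlam]
  · rcases le_or_gt ((m : ℝ) * τ) x with hcase2 | hcase2
    · -- m*τ ≤ x ≤ lam : single term k = m
      have hmem : (m : ℤ) ∈ Finset.Icc (-(m : ℤ)) (m : ℤ) := by
        rw [Finset.mem_Icc]; omega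
      rw [Finset.sum_eq_single_of_mem (m : ℤ) hmem]
      · -- compute the value
        have hub : x - (m : ℝ) * τ ≤ τ := by nlinarith [hlam]
        have hlb : 0 ≤ x - (m : ℝ) * τ := by linarith
        have habs2 : |x - (m : ℝ) * τ| ≤ τ := by rw [abs_of_nonneg hlb]; exact hub
        unfold hann tukey
        rw [if_pos, habs, if_neg, if_pos (by linarith)]
        · -- trig identity
          push_cast
          rw [Real.cos_sq]
          have hαne : α ≠ 0 := by rw [hα]; positivity
          have hA : 2 * (π / (2 * τ) * (x - (m : ℝ) * τ)) =
              (π * x / (α * lam) - π / α) + π := by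
            rw [ha2, hα]
            field_simp
            ring
          rw [hA, Real.cos_add_pi]
          ring
        · push_neg
          rw [ha1]; exact hcase2
        · exact_mod_cast habs2
      · intro k hk hkne
        rw [Finset.mem_Icc] at hk
        apply hann_zero τ _ hτ
        have hk' : k ≤ (m : ℤ) - 1 := by omega
        have hk'' : (k : ℝ) ≤ (m : ℝ) - 1 := by exact_mod_cast hk'
        have : τ ≤ x - (k : ℝ) * τ := by nlinarith
        exact this.trans (le_abs_self _)
    · -- 0 ≤ x < m*τ : two terms, j = ⌊x/τ⌋ and j+1
      set j : ℤ := ⌊x / τ⌋ with hj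
      have hj0 : 0 ≤ j := Int.floor_nonneg.mpr (by positivity)
      have hjlt : j < (m : ℤ) := by
        rw [hj]
        apply Int.floor_lt.mpr
        rw [div_lt_iff₀ hτ]
        push_cast
        linarith
      have hjle : (j : ℝ) * τ ≤ x := by
        have := Int.floor_le (x / τ)
        rw [← hj] at this
        calc (j : ℝ) * τ ≤ (x / τ) * τ := by
              apply mul_le_mul_of_nonneg_right this (le_of_lt hτ)
          _ = x := by field_simp
      have hjgt : x < ((j : ℝ) + 1) * τ := by
        have := Int.lt_floor_add_one (x / τ)
        rw [← hj] at this
        calc x = (x / τ) * τ := by field_simp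
          _ < ((j : ℝ) + 1) * τ := by
              apply mul_lt_mul_of_pos_right this hτ
      have hsub : Finset.Icc j (j + 1) ⊆ Finset.Icc (-(m : ℤ)) (m : ℤ) := by
        intro k hk
        rw [Finset.mem_Icc] at hk ⊢
        omega
      rw [← Finset.sum_subset hsub]
      · rw [show Finset.Icc j (j + 1) = {j, j + 1} from by
          ext k; simp only [Finset.mem_Icc, Finset.mem_insert, Finset.mem_singleton]; omega]
        rw [Finset.sum_pair (by omega : j ≠ j + 1)]
        have h1 : |x - (j : ℝ) * τ| ≤ τ := by
          rw [abs_of_nonneg (by linarith)]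
          linarith
        have h2 : |x - ((j : ℤ) + 1 : ℤ) * τ| ≤ τ := by
          push_cast
          rw [abs_of_nonpos (by linarith)]
          linarith
        unfold hann tukey
        rw [if_pos h1, if_pos h2, habs, if_pos (by rw [ha1]; linarith)]
        have hang : π / (2 * τ) * (x - ((j : ℤ) + 1 : ℤ) * τ) =
            -(π / 2 - π / (2 * τ) * (x - (j : ℝ) * τ)) := by
          push_cast
          field_simp
          ring
        rw [hang, Real.cos_neg, Real.cos_pi_div_two_sub]
        rw [add_comm]
        exact Real.sin_sq_add_cos_sq _
      · intro k hk hknot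
        rw [Finset.mem_Icc] at hk hknot
        apply hann_zero τ _ hτ
        rcases (by omega : k ≤ j - 1 ∨ j + 2 ≤ k) with hkk | hkk
        · have : (k : ℝ) ≤ (j : ℝ) - 1 := by exact_mod_cast hkk
          have : τ ≤ x - (k : ℝ) * τ := by nlinarith
          exact this.trans (le_abs_self _)
        · have : (j : ℝ) + 2 ≤ (k : ℝ) := by exact_mod_cast hkk
          have : τ ≤ (k : ℝ) * τ - x := by nlinarith
          calc τ ≤ (k : ℝ) * τ - x := this
            _ ≤ |x - (k : ℝ) * τ| := by
                rw [abs_sub_comm]; exact le_abs_self _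

theorem stmt_7 (τ : ℝ) (hτ : 0 < τ) (m : ℕ) (α lam : ℝ)
    (hα : α = 1 / ((m : ℝ) + 1)) (hlam : lam = ((m : ℝ) + 1) * τ) :
    ∀ x : ℝ, ∑ k ∈ Finset.Icc (-(m : ℤ)) (m : ℤ), hann τ (x - (k : ℝ) * τ) =
      tukey α lam x := by
  intro x
  rcases le_total 0 x with hx | hx
  · exact key_lemma τ hτ m α lam hα hlam x hx
  · have heven : ∑ k ∈ Finset.Icc (-(m : ℤ)) (m : ℤ), hann τ (x - (k : ℝ) * τ) =
        ∑ k ∈ Finset.Icc (-(m : ℤ)) (m : ℤ), hann τ (-x - (k : ℝ) * τ) := by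
      apply Finset.sum_equiv (Equiv.neg ℤ)
      · intro k
        simp only [Finset.mem_Icc, Equiv.neg_apply]
        omega
      · intro k _
        simp only [Equiv.neg_apply]
        rw [← hann_neg τ (x - (k : ℝ) * τ)]
        congr 1
        push_cast
        ring
    rw [heven, key_lemma τ hτ m α lam hα hlam (-x) (by linarith)]
    unfold tukey
    rw [abs_neg]
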